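/- Let ρ_J, ρ_K ∈ {ρ₁, ρ₂, ρ₃, ρ₁₂, ρ₂₃, ρ₁₂₃} be elements of the torus algebra 𝒜 with ρ_{JK} := ρ_J·ρ_K ≠ 0. Let M₂ be the type-D structure over 𝒜 with basis {a′, b′, c′, d′, e′, f′} and δ¹a′ = ρ_J ⊗ d′, δ¹b′ = 1 ⊗ a′ + ρ_J ⊗ e′ + 1 ⊗ c′, δ¹c′ = ρ_{JK} ⊗ f′, δ¹d′ = 0, δ¹e′ = 1 ⊗ d′ + ρ_K ⊗ f′, δ¹f′ = 0, and let M₂′ be the type-D structure with basis {z, w} and δ¹z = ρ_{JK} ⊗ w, δ¹w = 0. Then M₂ and M₂′ are homotopy equivalent. -/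

import Mathlib

/-- The torus algebra: the 8-dimensional `F₂`-algebra with basis
`{ι₀, ι₁, ρ₁, ρ₂, ρ₃, ρ₁₂, ρ₂₃, ρ₁₂₃}`, encoded by its full multiplication table. -/
structure TorusAlg (A : Type) [Ring A] [Algebra (ZMod 2) A] where
  i0 : A
  i1 : A
  r1 : A
  r2 : A
  r3 : A
  r12 : A
  r23 : A
  r123 : A
  basis_indep : LinearIndependent (ZMod 2) ![i0, i1, r1, r2, r3, r12, r23, r123]
  basis_span : Submodule.span (ZMod 2)
      ({i0, i1, r1, r2, r3, r12, r23, r123} : Set A) = ⊤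
  sum_idem : i0 + i1 = 1
  i0_i0 : i0 * i0 = i0
  i1_i1 : i1 * i1 = i1
  i0_i1 : i0 * i1 = 0
  i1_i0 : i1 * i0 = 0
  i0_r1 : i0 * r1 = r1
  r1_i1 : r1 * i1 = r1
  i1_r2 : i1 * r2 = r2
  r2_i0 : r2 * i0 = r2
  i0_r3 : i0 * r3 = r3
  r3_i1 : r3 * i1 = r3
  i0_r12 : i0 * r12 = r12
  r12_i0 : r12 * i0 = r12
  i1_r23 : i1 * r23 = r23
  r23_i1 : r23 * i1 = r23
  i0_r123 : i0 * r123 = r123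
  r123_i1 : r123 * i1 = r123
  r1_r2 : r1 * r2 = r12
  r2_r3 : r2 * r3 = r23
  r1_r23 : r1 * r23 = r123
  r12_r3 : r12 * r3 = r123
  r1_r1 : r1 * r1 = 0
  r1_r3 : r1 * r3 = 0
  r1_r12 : r1 * r12 = 0
  r1_r123 : r1 * r123 = 0
  r2_r1 : r2 * r1 = 0
  r2_r2 : r2 * r2 = 0
  r2_r12 : r2 * r12 = 0
  r2_r23 : r2 * r23 = 0
  r2_r123 : r2 * r123 = 0
  r3_r1 : r3 * r1 = 0
  r3_r2 : r3 * r2 = 0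
  r3_r3 : r3 * r3 = 0
  r3_r12 : r3 * r12 = 0
  r3_r23 : r3 * r23 = 0
  r3_r123 : r3 * r123 = 0
  r12_r1 : r12 * r1 = 0
  r12_r2 : r12 * r2 = 0
  r12_r12 : r12 * r12 = 0
  r12_r23 : r12 * r23 = 0
  r12_r123 : r12 * r123 = 0
  r23_r1 : r23 * r1 = 0
  r23_r2 : r23 * r2 = 0
  r23_r3 : r23 * r3 = 0
  r23_r12 : r23 * r12 = 0
  r23_r23 : r23 * r23 = 0
  r23_r123 : r23 * r123 = 0
  r123_r1 : r123 * r1 = 0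
  r123_r2 : r123 * r2 = 0
  r123_r3 : r123 * r3 = 0
  r123_r12 : r123 * r12 = 0
  r123_r23 : r123 * r23 = 0
  r123_r123 : r123 * r123 = 0

variable {A : Type} [Ring A] [Algebra (ZMod 2) A]

/-- Composition of morphisms of type-D structures, in matrix form. -/
def matComp {ι κ σ : Type} [Fintype κ] (F : ι → κ → A) (G : κ → σ → A) :
    ι → σ → A :=
  fun i s => ∑ j, F i j * G j s

/-- The identity morphism, in matrix form. -/
def matId {ι : Type} [DecidableEq ι] : ι → ι → A :=
  fun i j => if i = j then 1 else 0

/-- The differential of a morphism of type-D structures, in matrix form: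
`∂F = F · d_N + d_M · F`. -/
def matDiff {ι κ : Type} [Fintype ι] [Fintype κ]
    (dM : ι → ι → A) (dN : κ → κ → A) (F : ι → κ → A) : ι → κ → A :=
  fun i k => (∑ j, F i j * dN j k) + (∑ j, dM i j * F j k)

/-- The type-D structure equation `(μ ⊗ id) ∘ (id ⊗ δ¹) ∘ δ¹ = 0`, in matrix form. -/
def IsTypeD {ι : Type} [Fintype ι] (d : ι → ι → A) : Prop :=
  ∀ i k, (∑ j, d i j * d j k) = 0

/-- A morphism is a chain map when its differential vanishes. -/
def IsChainMap {ι κ : Type} [Fintype ι] [Fintype κ]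
    (dM : ι → ι → A) (dN : κ → κ → A) (F : ι → κ → A) : Prop :=
  matDiff dM dN F = 0

/-- Homotopy equivalence of two type-D structures, in matrix form:
chain maps `F`, `G` with `G ∘ F + id = ∂H` and `F ∘ G + id = ∂H'`. -/
def HtpyEquiv {ι κ : Type} [Fintype ι] [Fintype κ] [DecidableEq ι] [DecidableEq κ]
    (dM : ι → ι → A) (dN : κ → κ → A) : Prop :=
  ∃ (F : ι → κ → A) (G : κ → ι → A) (H : ι → ι → A) (H' : κ → κ → A),
    IsChainMap dM dN F ∧ IsChainMap dN dM G ∧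
    matComp F G + matId = matDiff dM dM H ∧
    matComp G F + matId = matDiff dN dN H'

/-- Generators of the type-D structure `M₂`. -/
inductive GM7 | a | b | c | d | e | f
deriving DecidableEq

instance : Fintype GM7 :=
  ⟨{.a, .b, .c, .d, .e, .f}, fun x => by cases x <;> simp⟩

/-- Generators of the type-D structure `M₂′`. -/
inductive GN7 | z | w
deriving DecidableEq

instance : Fintype GN7 :=
  ⟨{.z, .w}, fun x => by cases x <;> simp⟩

/-- `δ¹a′ = ρ_J ⊗ d′`, `δ¹b′ = 1 ⊗ a′ + ρ_J ⊗ e′ + 1 ⊗ c′`, `δ¹c′ = ρ_{JK} ⊗ f′`,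
`δ¹d′ = 0`, `δ¹e′ = 1 ⊗ d′ + ρ_K ⊗ f′`, `δ¹f′ = 0`. -/
def dM7 (ρJ ρK : A) : GM7 → GM7 → A
  | .a, .d => ρJ
  | .b, .a => 1
  | .b, .e => ρJ
  | .b, .c => 1
  | .c, .f => ρJ * ρK
  | .e, .d => 1
  | .e, .f => ρK
  | _, _ => 0

/-- `δ¹z = ρ_{JK} ⊗ w`, `δ¹w = 0`. -/
def dN7 (ρJ ρK : A) : GN7 → GN7 → A
  | .z, .w => ρJ * ρK
  | _, _ => 0

/-!
The arrows `b′ → a′` and `e′ → d′` of `M₂` have coefficient `1`, so they can be cancelled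
(edge reduction); what remains is `c′ → f′` with coefficient `ρ_{JK}`, i.e. `M₂′`. Explicitly,
the inclusion `z ↦ c′, w ↦ f′` and the projection `a′, c′ ↦ z`, `d′ ↦ ρ_K w`, `f′ ↦ w` compose
to the identity on `M₂′`, and to the identity up to the homotopy `a′ ↦ b′, d′ ↦ e′` on `M₂`; the
term `ρ_K w` is the zig-zag through `e′ → f′`. Every coefficient that has to vanish has the form
`x + x`.
-/

theorem add_self_eq_zero_of_zmod_two {R : Type} [AddCommGroup R] [Module (ZMod 2) R] (x : R) :
    x + x = 0 := by
  rw [← two_smul (ZMod 2) x, show (2 : ZMod 2) = 0 from rfl, zero_smul]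

theorem GM7.sum_univ {M : Type} [AddCommMonoid M] (g : GM7 → M) :
    ∑ j, g j = g .a + g .b + g .c + g .d + g .e + g .f := by
  simp [Finset.univ, Fintype.elems, add_assoc]

theorem GN7.sum_univ {M : Type} [AddCommMonoid M] (g : GN7 → M) :
    ∑ j, g j = g .z + g .w := by
  simp [Finset.univ, Fintype.elems]

section

variable {R : Type} [Ring R] (ρJ ρK : R)

def projM7 : GM7 → GN7 → R
  | .a, .z => 1
  | .c, .z => 1
  | .d, .w => ρK
  | .f, .w => 1
  | _, _ => 0

def inclM7 : GN7 → GM7 → R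
  | .z, .c => 1
  | .w, .f => 1
  | _, _ => 0

def homotopyM7 : GM7 → GM7 → R
  | .a, .b => 1
  | .d, .e => 1
  | _, _ => 0

theorem isTypeD_dM7 [Module (ZMod 2) R] : IsTypeD (dM7 ρJ ρK) := by
  intro i k
  cases i <;> cases k <;> simp [GM7.sum_univ, dM7, add_self_eq_zero_of_zmod_two]

theorem isTypeD_dN7 : IsTypeD (dN7 ρJ ρK) := by
  intro i k
  cases i <;> cases k <;> simp [GN7.sum_univ, dN7]

theorem isChainMap_projM7 [Module (ZMod 2) R] :
    IsChainMap (dM7 ρJ ρK) (dN7 ρJ ρK) (projM7 ρK) := by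
  funext i k
  cases i <;> cases k <;>
    simp [matDiff, GM7.sum_univ, GN7.sum_univ, dM7, dN7, projM7,
      add_self_eq_zero_of_zmod_two]

theorem isChainMap_inclM7 [Module (ZMod 2) R] :
    IsChainMap (dN7 ρJ ρK) (dM7 ρJ ρK) inclM7 := by
  funext i k
  cases i <;> cases k <;>
    simp [matDiff, GM7.sum_univ, GN7.sum_univ, dM7, dN7, inclM7,
      add_self_eq_zero_of_zmod_two]

theorem matComp_projM7_inclM7_add_matId [Module (ZMod 2) R] :
    matComp (projM7 ρK) inclM7 + matId = matDiff (dM7 ρJ ρK) (dM7 ρJ ρK) homotopyM7 := by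
  funext i k
  cases i <;> cases k <;>
    simp [matDiff, matComp, matId, GM7.sum_univ, GN7.sum_univ, dM7, projM7, inclM7,
      homotopyM7, add_self_eq_zero_of_zmod_two]

theorem matComp_inclM7_projM7 : matComp inclM7 (projM7 ρK) = (matId : GN7 → GN7 → R) := by
  funext i k
  cases i <;> cases k <;> simp [matComp, matId, GM7.sum_univ, projM7, inclM7]

theorem htpyEquiv_dM7_dN7 [Module (ZMod 2) R] : HtpyEquiv (dM7 ρJ ρK) (dN7 ρJ ρK) := by
  refine ⟨projM7 ρK, inclM7, homotopyM7, 0, isChainMap_projM7 ρJ ρK, isChainMap_inclM7 ρJ ρK,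
    matComp_projM7_inclM7_add_matId ρJ ρK, ?_⟩
  funext i k
  simp [matComp_inclM7_projM7, matDiff, add_self_eq_zero_of_zmod_two]

end

theorem statement7_general (A : Type) [Ring A] [Algebra (ZMod 2) A]
    (ρJ ρK : A) :
    IsTypeD (dM7 ρJ ρK) ∧ IsTypeD (dN7 ρJ ρK) ∧
      HtpyEquiv (dM7 ρJ ρK) (dN7 ρJ ρK) :=
  ⟨isTypeD_dM7 ρJ ρK, isTypeD_dN7 ρJ ρK, htpyEquiv_dM7_dN7 ρJ ρK⟩

theorem statement7 (A : Type) [Ring A] [Algebra (ZMod 2) A] (T : TorusAlg A)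
    (ρJ ρK : A)
    (hJ : ρJ ∈ ({T.r1, T.r2, T.r3, T.r12, T.r23, T.r123} : Set A))
    (hK : ρK ∈ ({T.r1, T.r2, T.r3, T.r12, T.r23, T.r123} : Set A))
    (hJK : ρJ * ρK ≠ 0) :
    IsTypeD (dM7 ρJ ρK) ∧ IsTypeD (dN7 ρJ ρK) ∧
      HtpyEquiv (dM7 ρJ ρK) (dN7 ρJ ρK) :=
  statement7_general A ρJ ρK
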